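/- Let G(E) be a well-formed TFG for an E-equivalence between safe marked Petri nets, with node concurrency relation C. If v ∘→ X or X →• v, then any two distinct nodes w, w' in X are nonconcurrent: w C̄ w'. -/

import Mathlib

open Finset

/-- A Petri net over a type of places `P`. -/
structure PetriNet (P : Type) where
  Trans : Type
  pre : Trans → P → ℕ
  post : Trans → P → ℕ

/-- Firing relation between markings. -/
def PetriNet.fire {P : Type} (N : PetriNet P) (m m' : P → ℕ) : Prop :=
  ∃ t : N.Trans, (∀ p, N.pre t p ≤ m p) ∧ ∀ p, m' p = m p - N.pre t p + N.post t p

/-- Reachability of a marking from an initial one. -/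
def PetriNet.reach {P : Type} (N : PetriNet P) (m0 m : P → ℕ) : Prop :=
  Relation.ReflTransGen N.fire m0 m

/-- A marked net is safe (1-bounded) when every reachable marking has at most one token per place. -/
def PetriNet.Safe {P : Type} (N : PetriNet P) (m0 : P → ℕ) : Prop :=
  ∀ m, N.reach m0 m → ∀ p, m p ≤ 1

/-- Two places are concurrent when some reachable marking marks both positively. -/
def PetriNet.ConcPlaces {P : Type} (N : PetriNet P) (m0 : P → ℕ) (p q : P) : Prop :=
  ∃ m, N.reach m0 m ∧ 0 < m p ∧ 0 < m q

/-- A Token Flow Graph: redundancy arcs `R`, agglomeration arcs `A` (disjoint from `R`,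
enforced in well-formedness), and constant nodes given by `kval`. -/
structure TFG (V : Type) [DecidableEq V] where
  R : Finset (V × V)
  A : Finset (V × V)
  kval : V → Option ℕ

variable {V : Type} [DecidableEq V]

def TFG.Edge (G : TFG V) (v w : V) : Prop := (v, w) ∈ G.R ∨ (v, w) ∈ G.A

/-- `G.Reach v w` means `v →* w`. -/
def TFG.Reach (G : TFG V) : V → V → Prop := Relation.ReflTransGen G.Edge

/-- Successor set `succ(v)` (includes `v` itself). -/
def TFG.succs (G : TFG V) (v : V) : Set V := {w | G.Reach v w}

/-- A root has no incoming arc. -/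
def TFG.IsRoot (G : TFG V) (v : V) : Prop := ∀ w, ¬ G.Edge w v

/-- A ∘-leaf has no outgoing agglomeration arc. -/
def TFG.IsCircLeaf (G : TFG V) (v : V) : Prop := ∀ w, (v, w) ∉ G.A

/-- The set `X` such that `v ∘→ X` (agglomeration children of `v`). -/
def TFG.aggChildren (G : TFG V) (v : V) : Finset V :=
  (G.A.filter (fun e => e.1 = v)).image Prod.snd

/-- The set `X` such that `X →• v` (redundancy parents of `v`). -/
def TFG.redParents (G : TFG V) (v : V) : Finset V :=
  (G.R.filter (fun e => e.2 = v)).image Prod.fst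

/-- A configuration is a partial valuation of the nodes; it must agree with constant nodes. -/
def TFG.IsConfig (G : TFG V) (c : V → Option ℕ) : Prop :=
  ∀ v n, G.kval v = some n → c v = some n

/-- A configuration is total when it is defined on every node. -/
def TotalConf (c : V → Option ℕ) : Prop := ∀ v, c v ≠ none

/-- Value of a configuration at a node (0 if undefined). -/
def cval (c : V → Option ℕ) (v : V) : ℕ := (c v).getD 0

/-- Well-definedness of a configuration: conditions (CBot) and (CEq). -/
def TFG.WellDef (G : TFG V) (c : V → Option ℕ) : Prop :=
  (∀ v w, G.Edge v w → (c v = none ↔ c w = none)) ∧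
  (∀ v n, c v = some n →
    ((G.aggChildren v).Nonempty → n = ∑ w ∈ G.aggChildren v, cval c w) ∧
    ((G.redParents v).Nonempty → n = ∑ w ∈ G.redParents v, cval c w))

/-- A system of reduction equations: `(v, X)` stands for the equation `v = ∑_{w ∈ X} w`. -/
abbrev EqSys (V : Type) := Finset (V × Finset V)

/-- A (non-negative integer) solution of the system `E`. -/
def Solves (E : EqSys V) (s : V → ℕ) : Prop :=
  ∀ e ∈ E, s e.1 = ∑ w ∈ e.2, s w

/-- `E, ⟦c⟧` is consistent: some solution of `E` extends the partial valuation `c`. -/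
def ConsistentWith (E : EqSys V) (c : V → Option ℕ) : Prop :=
  ∃ s : V → ℕ, Solves E s ∧ ∀ v n, c v = some n → s v = n

/-- Variables occurring in `E`. -/
def fvars (E : EqSys V) : Set V := {v | ∃ e ∈ E, v = e.1 ∨ v ∈ e.2}

/-- View a marking over the set of places `P` as a partial configuration over `V`. -/
def mconf (P : Set V) [DecidablePred (· ∈ P)] (m : ↥P → ℕ) : V → Option ℕ :=
  fun v => if h : v ∈ P then some (m ⟨v, h⟩) else none

/-- Restriction of a configuration to a set of places, seen as a marking. -/
def restrict (c : V → Option ℕ) (P : Set V) : ↥P → ℕ := fun p => cval c ↑p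

/-- Compatibility `c ≡ m` of a configuration with a marking on `P`. -/
def CompatM (c : V → Option ℕ) (P : Set V) (m : ↥P → ℕ) : Prop :=
  ∀ p : ↥P, c ↑p = some (m p)

/-- A solution of `E` agrees with a marking on `P`. -/
def AgreesOn (s : V → ℕ) (P : Set V) (m : ↥P → ℕ) : Prop := ∀ p : ↥P, s ↑p = m p

/-- `E`-equivalence `(N1,m1) ▷_E (N2,m2)`: conditions (A1), (A2), (A3). -/
structure EEquiv (E : EqSys V) (P1 P2 : Set V)
    (N1 : PetriNet ↥P1) (m1 : ↥P1 → ℕ) (N2 : PetriNet ↥P2) (m2 : ↥P2 → ℕ) : Prop where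
  A1l : ∀ m, N1.reach m1 m → ∃ s, Solves E s ∧ AgreesOn s P1 m
  A1r : ∀ m, N2.reach m2 m → ∃ s, Solves E s ∧ AgreesOn s P2 m
  A2 : ∃ s, Solves E s ∧ AgreesOn s P1 m1 ∧ AgreesOn s P2 m2
  A3 : ∀ m1' m2', (∃ s, Solves E s ∧ AgreesOn s P1 m1' ∧ AgreesOn s P2 m2') →
      (N1.reach m1 m1' ↔ N2.reach m2 m2')

/-- Well-formedness of a TFG for an equivalence statement: conditions (T1)–(T6). -/
structure WellFormed (G : TFG V) (E : EqSys V) (P1 P2 : Set V) : Prop where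
  T1 : {v | G.kval v = none} = P1 ∪ P2 ∪ fvars E
  T2 : ∀ v, G.kval v ≠ none → G.IsRoot v
  T3a : ∀ p p' q, (p, q) ∈ G.A → G.Edge p' q → p' = p
  T3b : ∀ p q, ¬((p, q) ∈ G.R ∧ (p, q) ∈ G.A)
  T4 : ∀ v X, ((X = G.aggChildren v ∨ X = G.redParents v) ∧ X.Nonempty) ↔ (v, X) ∈ E
  T5 : ∀ v, ¬ Relation.TransGen G.Edge v v
  T6root : ∀ v, G.kval v = none → (G.IsRoot v ↔ v ∈ P2)
  T6leaf : ∀ v, G.kval v = none → (G.IsCircLeaf v ↔ v ∈ P1)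

/-- Node concurrency relation of the TFG: both nodes are positive in some
total, well-defined configuration whose restriction to `N2` is reachable. -/
def NodeConc (G : TFG V) (P2 : Set V) [DecidablePred (· ∈ P2)]
    (N2 : PetriNet ↥P2) (m2 : ↥P2 → ℕ) (v w : V) : Prop :=
  ∃ c, G.IsConfig c ∧ TotalConf c ∧ G.WellDef c ∧ N2.reach m2 (restrict c P2) ∧
    0 < cval c v ∧ 0 < cval c w

/-! If `w` and `w'` were concurrent, the reachable configuration would give the non-constant
node `v` a value `≥ 2`. From any solution `s` of `E` one builds another solution that agrees
with `s` off the strict descendants of `v` (in particular on the roots, the places of `N2`) and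
carries the whole value of `v` down a chain of agglomeration arcs to a ∘-leaf, a place of `N1`.
By (A3) the corresponding marking of `N1` is reachable, yet it puts `s v ≥ 2` tokens on that
place, contradicting the safety of `N1`. -/

theorem Relation.wellFounded_of_finite_sources {α : Type*} {r : α → α → Prop} {S : Set α}
    (hS : S.Finite) (hsrc : ∀ a b, r a b → a ∈ S)
    (hacyc : ∀ a, ¬ Relation.TransGen r a a) : WellFounded r := by
  refine Subrelation.wf (fun {a b} hab => ?_)
    (measure fun b => {x ∈ S | Relation.TransGen r x b}.ncard).wf
  refine Set.ncard_lt_ncard ?_ (hS.subset (Set.sep_subset S _))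
  exact (Set.ssubset_iff_of_subset fun x hx => Set.mem_sep hx.1 (hx.2.tail hab)).mpr
    ⟨a, Set.mem_sep (hsrc a b hab) (.single hab), fun h => hacyc a h.2⟩

namespace TFG

variable {G : TFG V}

theorem mem_aggChildren {a u : V} : u ∈ G.aggChildren a ↔ (a, u) ∈ G.A := by
  simp [aggChildren]

theorem mem_redParents {a u : V} : u ∈ G.redParents a ↔ (u, a) ∈ G.R := by
  simp [redParents]

theorem wellFounded_edge (hacyc : ∀ v, ¬ Relation.TransGen G.Edge v v) :
    WellFounded G.Edge :=
  Relation.wellFounded_of_finite_sources ((G.R ∪ G.A).image Prod.fst).finite_toSet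
    (fun _ _ h => Finset.mem_image_of_mem Prod.fst (Finset.mem_union.mpr h))
    hacyc

theorem wellFounded_flip_edge (hacyc : ∀ v, ¬ Relation.TransGen G.Edge v v) :
    WellFounded (flip G.Edge) :=
  Relation.wellFounded_of_finite_sources ((G.R ∪ G.A).image Prod.snd).finite_toSet
    (fun _ _ h => Finset.mem_image_of_mem Prod.snd (Finset.mem_union.mpr h))
    (fun v h => hacyc v (Relation.transGen_swap.mp h))

noncomputable def mainChild (G : TFG V) (a : V) : V :=
  if h : (G.aggChildren a).Nonempty then h.choose else a

theorem mainChild_mem {a : V} (h : (G.aggChildren a).Nonempty) :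
    G.mainChild a ∈ G.aggChildren a := by
  rw [mainChild, dif_pos h]
  exact h.choose_spec

open Classical in
/-- Modifies `s` below `v`: every agglomeration node reachable from `v` passes its whole value to
its main child, redundancy nodes are recomputed from their parents, and `s` is kept elsewhere. -/
noncomputable def redirect (G : TFG V) (hG : WellFounded G.Edge) (s : V → ℕ) (v : V) :
    V → ℕ :=
  hG.fix fun u M =>
    if h : ∃ a, (a, u) ∈ G.A then
      if G.Reach v h.choose then
        if u = G.mainChild h.choose then M h.choose (Or.inr h.choose_spec) else 0
      else s u
    else if (G.redParents u).Nonempty then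
      ∑ q ∈ (G.redParents u).attach, M q (Or.inl (mem_redParents.mp q.2))
    else s u

end TFG

namespace WellFormed

open TFG

variable {G : TFG V} {E : EqSys V} {P1 P2 : Set V}

theorem wellFounded_edge (hwf : WellFormed G E P1 P2) : WellFounded G.Edge :=
  G.wellFounded_edge hwf.T5

theorem kval_eq_none_of_mem_P2 (hwf : WellFormed G E P1 P2) {p : V} (hp : p ∈ P2) :
    G.kval p = none :=
  (Set.ext_iff.mp hwf.T1 p).mpr (Or.inl (Or.inr hp))

theorem kval_eq_none_of_mem_fvars (hwf : WellFormed G E P1 P2) {v : V} (hv : v ∈ fvars E) :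
    G.kval v = none :=
  (Set.ext_iff.mp hwf.T1 v).mpr (Or.inr hv)

theorem kval_eq_none_of_reach (hwf : WellFormed G E P1 P2) {v p : V} (hv : G.kval v = none)
    (h : G.Reach v p) : G.kval p = none := by
  rcases Relation.ReflTransGen.cases_tail h with rfl | ⟨b, -, hbp⟩
  · exact hv
  · by_contra hp
    exact hwf.T2 p hp b hbp

theorem not_mem_A_of_redParents_nonempty (hwf : WellFormed G E P1 P2) {a u : V}
    (hr : (G.redParents u).Nonempty) : (a, u) ∉ G.A := by
  intro hau
  obtain ⟨q, hq⟩ := hr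
  have hqu := mem_redParents.mp hq
  obtain rfl := hwf.T3a a q u hau (Or.inl hqu)
  exact hwf.T3b q u ⟨hqu, hau⟩

theorem solves_cval (hwf : WellFormed G E P1 P2) {c : V → Option ℕ} (htot : TotalConf c)
    (hwd : G.WellDef c) : Solves E (cval c) := by
  rintro ⟨v, X⟩ he
  obtain ⟨n, hn⟩ := Option.ne_none_iff_exists'.mp (htot v)
  obtain ⟨rfl | rfl, hne⟩ := (hwf.T4 v X).mpr he
  · simpa [cval, hn] using (hwd.2 v n hn).1 hne
  · simpa [cval, hn] using (hwd.2 v n hn).2 hne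

variable (hwf : WellFormed G E P1 P2) (s : V → ℕ) (v : V)

open Classical in
theorem redirect_of_mem_A {a u : V} (hau : (a, u) ∈ G.A) :
    G.redirect hwf.wellFounded_edge s v u =
      if G.Reach v a then
        if u = G.mainChild a then G.redirect hwf.wellFounded_edge s v a else 0
      else s u := by
  have hA : ∃ a, (a, u) ∈ G.A := ⟨a, hau⟩
  obtain rfl : hA.choose = a := hwf.T3a a _ u hau (Or.inr hA.choose_spec)
  rw [redirect, WellFounded.fix_eq, dif_pos hA]

theorem redirect_of_redParents_nonempty {u : V} (hr : (G.redParents u).Nonempty) :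
    G.redirect hwf.wellFounded_edge s v u =
      ∑ q ∈ G.redParents u, G.redirect hwf.wellFounded_edge s v q := by
  have hA : ¬ ∃ a, (a, u) ∈ G.A := fun ⟨_, hau⟩ =>
    hwf.not_mem_A_of_redParents_nonempty hr hau
  rw [redirect, WellFounded.fix_eq, dif_neg hA, if_pos hr]
  exact Finset.sum_attach _ _

theorem redirect_of_isRoot {u : V} (hu : G.IsRoot u) :
    G.redirect hwf.wellFounded_edge s v u = s u := by
  have hA : ¬ ∃ a, (a, u) ∈ G.A := fun ⟨a, hau⟩ => hu a (Or.inr hau)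
  have hr : ¬ (G.redParents u).Nonempty := fun ⟨q, hq⟩ => hu q (Or.inl (mem_redParents.mp hq))
  rw [redirect, WellFounded.fix_eq, dif_neg hA, if_neg hr]

variable {s}

theorem redirect_eq_of_not_transGen (hs : Solves E s) (u : V)
    (hu : ¬ Relation.TransGen G.Edge v u) : G.redirect hwf.wellFounded_edge s v u = s u := by
  induction u using hwf.wellFounded_edge.induction with
  | _ u ih =>
    by_cases hA : ∃ a, (a, u) ∈ G.A
    · obtain ⟨a, hau⟩ := hA
      have hva : ¬ G.Reach v a := fun h => hu (Relation.TransGen.tail' h (Or.inr hau))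
      rw [redirect_of_mem_A hwf s v hau, if_neg hva]
    by_cases hr : (G.redParents u).Nonempty
    · have hparents : ∀ q ∈ G.redParents u, G.redirect hwf.wellFounded_edge s v q = s q :=
        fun q hq =>
          have hqu : G.Edge q u := Or.inl (mem_redParents.mp hq)
          ih q hqu fun h => hu (h.tail hqu)
      rw [redirect_of_redParents_nonempty hwf s v hr, Finset.sum_congr rfl hparents]
      exact (hs _ ((hwf.T4 u _).mp ⟨Or.inr rfl, hr⟩)).symm
    · refine redirect_of_isRoot hwf s v fun a hau => ?_
      rcases hau with hau | hau
      · exact hr ⟨a, mem_redParents.mpr hau⟩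
      · exact hA ⟨a, hau⟩

theorem solves_redirect (hs : Solves E s) : Solves E (G.redirect hwf.wellFounded_edge s v) := by
  rintro ⟨a, X⟩ he
  obtain ⟨rfl | rfl, hne⟩ := (hwf.T4 a X).mpr he
  · have hchild := fun u (hu : u ∈ G.aggChildren a) =>
      redirect_of_mem_A hwf s v (mem_aggChildren.mp hu)
    rw [Finset.sum_congr rfl hchild]
    by_cases hva : G.Reach v a
    · simp only [if_pos hva]
      rw [Finset.sum_ite_eq' _ _ (fun _ => _), if_pos (mainChild_mem hne)]
    · simp only [if_neg hva]
      rw [redirect_eq_of_not_transGen hwf v hs a fun h => hva h.to_reflTransGen]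
      exact hs _ he
  · exact redirect_of_redParents_nonempty hwf s v hne

theorem exists_circLeaf_redirect_eq (u : V) (hu : G.Reach v u) :
    ∃ p, G.Reach v p ∧ G.IsCircLeaf p ∧
      G.redirect hwf.wellFounded_edge s v p = G.redirect hwf.wellFounded_edge s v u := by
  induction u using (G.wellFounded_flip_edge hwf.T5).induction with
  | _ u ih =>
    by_cases hne : (G.aggChildren u).Nonempty
    · have hchild : (u, G.mainChild u) ∈ G.A := mem_aggChildren.mp (mainChild_mem hne)
      obtain ⟨p, hvp, hp, hval⟩ := ih _ (Or.inr hchild) (hu.tail (Or.inr hchild))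
      refine ⟨p, hvp, hp, hval.trans ?_⟩
      rw [redirect_of_mem_A hwf s v hchild, if_pos hu, if_pos rfl]
    · exact ⟨u, hu, fun w hw => hne ⟨w, mem_aggChildren.mpr hw⟩, rfl⟩

end WellFormed

theorem WellFormed.le_one_of_reach {G : TFG V} {E : EqSys V} {P1 P2 : Set V}
    {N1 : PetriNet ↥P1} {m1 : ↥P1 → ℕ} {N2 : PetriNet ↥P2} {m2 : ↥P2 → ℕ}
    (hwf : WellFormed G E P1 P2) (heq : EEquiv E P1 P2 N1 m1 N2 m2) (hsafe1 : N1.Safe m1)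
    {s : V → ℕ} (hs : Solves E s) (hreach : N2.reach m2 fun p => s p) {v : V}
    (hv : G.kval v = none) : s v ≤ 1 := by
  obtain ⟨p, hvp, hleaf, hMp⟩ := hwf.exists_circLeaf_redirect_eq v v .refl
  set M := G.redirect hwf.wellFounded_edge s v
  have hMv : M v = s v := hwf.redirect_eq_of_not_transGen v hs v (hwf.T5 v)
  have hpP1 : p ∈ P1 := (hwf.T6leaf p (hwf.kval_eq_none_of_reach hv hvp)).mp hleaf
  have hagree : AgreesOn M P2 fun p => s p := fun r =>
    hwf.redirect_eq_of_not_transGen v hs r fun h => by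
      obtain ⟨b, -, hbr⟩ := Relation.TransGen.tail'_iff.mp h
      exact (hwf.T6root r (hwf.kval_eq_none_of_mem_P2 r.2)).mpr r.2 b hbr
  have hreachM : N1.reach m1 fun q => M q :=
    (heq.A3 _ _ ⟨M, hwf.solves_redirect v hs, fun _ => rfl, hagree⟩).mpr hreach
  simpa [hMp, hMv] using hsafe1 _ hreachM ⟨p, hpP1⟩

theorem siblings_nonconcurrent_general {V : Type} [DecidableEq V] (G : TFG V) (E : EqSys V)
    (P1 P2 : Set V) [DecidablePred (· ∈ P2)]
    (N1 : PetriNet ↥P1) (m1 : ↥P1 → ℕ) (N2 : PetriNet ↥P2) (m2 : ↥P2 → ℕ)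
    (hwf : WellFormed G E P1 P2) (heq : EEquiv E P1 P2 N1 m1 N2 m2)
    (hsafe1 : N1.Safe m1)
    (v : V) (X : Finset V)
    (hX : (X = G.aggChildren v ∨ X = G.redParents v) ∧ X.Nonempty) :
    ∀ w ∈ X, ∀ w' ∈ X, w ≠ w' → ¬ NodeConc G P2 N2 m2 w w' := by
  rintro w hw w' hw' hne ⟨c, -, htot, hwd, hreach, hcw, hcw'⟩
  have hs := hwf.solves_cval htot hwd
  have hvE : (v, X) ∈ E := (hwf.T4 v X).mp hX
  have hv : G.kval v = none := hwf.kval_eq_none_of_mem_fvars ⟨_, hvE, Or.inl rfl⟩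
  have hpair : cval c w + cval c w' ≤ cval c v := by
    rw [hs _ hvE, ← Finset.sum_pair hne]
    exact Finset.sum_le_sum_of_subset
      (Finset.insert_subset hw (Finset.singleton_subset_iff.mpr hw'))
  have := hwf.le_one_of_reach heq hsafe1 hs hreach hv
  omega

theorem siblings_nonconcurrent {V : Type} [DecidableEq V] (G : TFG V) (E : EqSys V)
    (P1 P2 : Set V) [DecidablePred (· ∈ P1)] [DecidablePred (· ∈ P2)]
    (N1 : PetriNet ↥P1) (m1 : ↥P1 → ℕ) (N2 : PetriNet ↥P2) (m2 : ↥P2 → ℕ)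
    (hwf : WellFormed G E P1 P2) (heq : EEquiv E P1 P2 N1 m1 N2 m2)
    (hsafe1 : N1.Safe m1) (hsafe2 : N2.Safe m2)
    (v : V) (X : Finset V)
    (hX : (X = G.aggChildren v ∨ X = G.redParents v) ∧ X.Nonempty) :
    ∀ w ∈ X, ∀ w' ∈ X, w ≠ w' → ¬ NodeConc G P2 N2 m2 w w' :=
  siblings_nonconcurrent_general G E P1 P2 N1 m1 N2 m2 hwf heq hsafe1 v X hX
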